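/- arXiv:1810.00915 — 9 statements merged into one kernel-verified Lean document; each statement's English description precedes it below -/
import Mathlib

section
/- Let n, k, t be integers with 1 ≤ t < k ≤ n. Let F be a family of k-element subsets of [n] with maximum degree Δ and diversity γ. If Δ + (k/(k-t))·γ ≤ C(n-1, k-1), then δ_t(F) ≤ C(n-t-1, k-t-1). -/
/-!
Fix an element `i` of maximum degree `Δ` and average the `t`-degree over the `C(n-1, t)`
`t`-subsets of `[n] \ {i}`. Double counting gives the total `Δ·C(k-1,t) + γ·C(k,t)`, since a set
through `i` contains `C(k-1,t)` of them and any other set `C(k,t)`. As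
`k·C(k-1,t) = (k-t)·C(k,t)`, the hypothesis bounds this total by
`C(n-1,k-1)·C(k-1,t) = C(n-1,t)·C(n-t-1,k-t-1)`, so some `t`-subset has `t`-degree at most
`C(n-t-1,k-t-1)`.
-/

open Finset

namespace Finset

variable {α : Type*} [DecidableEq α]

theorem sum_card_filter_subset_powersetCard (U : Finset α) (F : Finset (Finset α)) (t : ℕ) :
    ∑ T ∈ U.powersetCard t, #(F.filter (fun A => T ⊆ A)) = ∑ A ∈ F, (#(A ∩ U)).choose t := by
  simp_rw [card_filter]
  rw [sum_comm]
  refine sum_congr rfl fun A _ => ?_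
  rw [← card_filter, ← card_powersetCard]
  congr 1
  ext T
  simp only [mem_filter, mem_powersetCard, subset_inter_iff]
  tauto

theorem sum_apply_card_erase_of_card_eq {β : Type*} [AddCommMonoid β]
    {F : Finset (Finset α)} {k : ℕ} (hF : ∀ A ∈ F, #A = k) (i : α) (f : ℕ → β) :
    ∑ A ∈ F, f #(A.erase i) =
      #(F.filter (fun A => i ∈ A)) • f (k - 1) + #(F.filter (fun A => i ∉ A)) • f k := by
  rw [← sum_filter_add_sum_filter_not F (fun A => i ∈ A)]
  congr 1
  · rw [← sum_const]
    refine sum_congr rfl fun A hA => ?_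
    rw [mem_filter] at hA
    rw [card_erase_of_mem hA.2, hF A hA.1]
  · rw [← sum_const]
    refine sum_congr rfl fun A hA => ?_
    rw [mem_filter] at hA
    rw [erase_eq_of_notMem hA.2, hF A hA.1]

end Finset

theorem Nat.mul_choose_pred_eq {k t : ℕ} (hk : 0 < k) :
    k * (k - 1).choose t = (k - t) * k.choose t := by
  obtain ⟨m, rfl⟩ := Nat.exists_eq_add_one_of_ne_zero hk.ne'
  simpa [mul_comm] using Nat.choose_mul_succ_eq m t

theorem weighted_le_iff_mul_choose {k t : ℕ} (htk : t < k) (Δ γ N : ℕ) :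
    (Δ : ℝ) + k / (k - t) * γ ≤ N ↔
      Δ * (k - 1).choose t + γ * k.choose t ≤ N * (k - 1).choose t := by
  have hkt : (0 : ℝ) < k - t := sub_pos.2 (by exact_mod_cast htk)
  have hc : (0 : ℝ) < (k - 1).choose t := by
    exact_mod_cast Nat.choose_pos (show t ≤ k - 1 by omega)
  have hid : (k : ℝ) * (k - 1).choose t = (k - t) * k.choose t := by
    have := Nat.mul_choose_pred_eq (t := t) (show 0 < k by omega)
    rw [← Nat.cast_sub htk.le]
    exact_mod_cast this
  have hC : (k : ℝ) / (k - t) * (k - 1).choose t = k.choose t := by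
    rw [div_mul_eq_mul_div, hid, mul_div_cancel_left₀ _ hkt.ne']
  rw [← Nat.cast_le (α := ℝ), ← mul_le_mul_iff_of_pos_right hc, add_mul,
    mul_right_comm _ (γ : ℝ), hC]
  push_cast
  rw [mul_comm (γ : ℝ)]

theorem prop_weighted_degree_general (n k t : ℕ) (htk : t < k) (hkn : k ≤ n)
    (F : Finset (Finset (Fin n)))
    (hcard : ∀ A ∈ F, A.card = k)
    (hweight :
      ((Finset.univ.sup (fun i : Fin n => (F.filter (fun A => i ∈ A)).card) : ℕ) : ℝ) +
        (k : ℝ) / ((k : ℝ) - (t : ℝ)) *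
          ((F.card - Finset.univ.sup (fun i : Fin n => (F.filter (fun A => i ∈ A)).card) : ℕ) : ℝ)
        ≤ ((n - 1).choose (k - 1) : ℝ)) :
    ∃ T : Finset (Fin n), T.card = t ∧
      (F.filter (fun A => T ⊆ A)).card ≤ (n - t - 1).choose (k - t - 1) := by
  obtain ⟨i, -, hi⟩ := exists_mem_eq_sup univ (univ_nonempty_iff.2 ⟨⟨0, by omega⟩⟩)
    (fun i : Fin n => #(F.filter (fun A => i ∈ A)))
  have hγ : #F - #(F.filter (fun A => i ∈ A)) = #(F.filter (fun A => i ∉ A)) := by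
    rw [← card_filter_add_card_filter_not (s := F) (p := fun A => i ∈ A), Nat.add_sub_cancel_left]
  rw [hi, hγ, weighted_le_iff_mul_choose htk] at hweight
  set S := (univ.erase i).powersetCard t
  have hS : #S = (n - 1).choose t := by simp [S]
  have hsum : ∑ T ∈ S, #(F.filter (fun A => T ⊆ A)) ≤ ∑ _T ∈ S, (n - t - 1).choose (k - t - 1) := by
    rw [sum_const, smul_eq_mul, hS, sum_card_filter_subset_powersetCard]
    simp_rw [inter_erase, inter_univ]
    rw [sum_apply_card_erase_of_card_eq hcard i (·.choose t), smul_eq_mul, smul_eq_mul]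
    calc _ ≤ (n - 1).choose (k - 1) * (k - 1).choose t := hweight
      _ = _ := by
        rw [Nat.choose_mul (by omega), Nat.sub_right_comm, Nat.sub_right_comm k]
  have hSne : S.Nonempty := by
    rw [← card_pos, hS]
    exact Nat.choose_pos (by omega)
  obtain ⟨T, hTS, hT⟩ := exists_le_of_sum_le hSne hsum
  exact ⟨T, (mem_powersetCard.1 hTS).2, hT⟩

/-- Proposition 8: if a family `F` of `k`-subsets of `[n]` with maximum degree `Δ`
and diversity `γ = |F| - Δ` satisfies `Δ + (k/(k-t))·γ ≤ C(n-1, k-1)`, then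
`δ_t(F) ≤ C(n-t-1, k-t-1)`. -/
theorem prop_weighted_degree (n k t : ℕ) (ht : 1 ≤ t) (htk : t < k) (hkn : k ≤ n)
    (F : Finset (Finset (Fin n)))
    (hcard : ∀ A ∈ F, A.card = k)
    (hweight :
      ((Finset.univ.sup (fun i : Fin n => (F.filter (fun A => i ∈ A)).card) : ℕ) : ℝ) +
        (k : ℝ) / ((k : ℝ) - (t : ℝ)) *
          ((F.card - Finset.univ.sup (fun i : Fin n => (F.filter (fun A => i ∈ A)).card) : ℕ) : ℝ)
        ≤ ((n - 1).choose (k - 1) : ℝ)) :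
    ∃ T : Finset (Fin n), T.card = t ∧
      (F.filter (fun A => T ⊆ A)).card ≤ (n - t - 1).choose (k - t - 1) :=
  prop_weighted_degree_general n k t htk hkn F hcard hweight
end

section
/- Let n > 2k > 0 and let A and B be two distinct k-element subsets of [n]\{1}. Then the number of k-element subsets S of [n] with 1 ∈ S, S ∩ A ≠ ∅ and S ∩ B ≠ ∅ is at most C(n-1, k-1) - C(n-k-1, k-1) - C(n-k-2, k-2). -/
open Finset

lemma count_avoid (n k : ℕ) (hk : 0 < k) (hn : 1 ≤ n) (C : Finset ℕ)
    (hC : C ⊆ Finset.Icc 2 n) :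
    (((Finset.Icc 1 n).powersetCard k).filter (fun S => 1 ∈ S ∧ S ∩ C = ∅)).card
      = ((n - 1) - C.card).choose (k - 1) := by
  have h1C : (1 : ℕ) ∉ C := fun h => by simpa using hC h
  have hcard : ((Finset.Icc 2 n) \ C).card = (n - 1) - C.card := by
    rw [Finset.card_sdiff_of_subset hC, Nat.card_Icc]
    omega
  have key : (((Finset.Icc 1 n).powersetCard k).filter (fun S => 1 ∈ S ∧ S ∩ C = ∅)).card
      = (((Finset.Icc 2 n) \ C).powersetCard (k - 1)).card := by
    refine Finset.card_bij' (fun S _ => S.erase 1) (fun T _ => insert 1 T) ?_ ?_ ?_ ?_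
    · intro S hS
      simp only [Finset.mem_filter, Finset.mem_powersetCard] at hS
      obtain ⟨⟨hSsub, hScard⟩, h1S, hSC⟩ := hS
      rw [Finset.mem_powersetCard]
      constructor
      · intro x hx
        rw [Finset.mem_erase] at hx
        obtain ⟨hx1, hxS⟩ := hx
        have := hSsub hxS
        rw [Finset.mem_Icc] at this
        rw [Finset.mem_sdiff, Finset.mem_Icc]
        refine ⟨⟨by omega, this.2⟩, ?_⟩
        intro hxC
        exact Finset.notMem_empty x (hSC ▸ Finset.mem_inter.2 ⟨hxS, hxC⟩)
      · rw [Finset.card_erase_of_mem h1S, hScard]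
    · intro T hT
      rw [Finset.mem_powersetCard] at hT
      obtain ⟨hTsub, hTcard⟩ := hT
      have h1T : (1 : ℕ) ∉ T := fun h => by
        have := hTsub h
        rw [Finset.mem_sdiff, Finset.mem_Icc] at this
        omega
      simp only [Finset.mem_filter, Finset.mem_powersetCard]
      refine ⟨⟨?_, ?_⟩, Finset.mem_insert_self 1 T, ?_⟩
      · intro x hx
        rw [Finset.mem_insert] at hx
        rcases hx with rfl | hx
        · rw [Finset.mem_Icc]; omega
        · have := hTsub hx
          rw [Finset.mem_sdiff, Finset.mem_Icc] at this
          rw [Finset.mem_Icc]; omega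
      · rw [Finset.card_insert_of_notMem h1T, hTcard]; omega
      · rw [Finset.eq_empty_iff_forall_notMem]
        intro x hx
        rw [Finset.mem_inter, Finset.mem_insert] at hx
        obtain ⟨h1 | h1, h2⟩ := hx
        · exact h1C (h1 ▸ h2)
        · have := hTsub h1
          rw [Finset.mem_sdiff] at this
          exact this.2 h2
    · intro S hS
      simp only [Finset.mem_filter] at hS
      exact Finset.insert_erase hS.2.1
    · intro T hT
      rw [Finset.mem_powersetCard] at hT
      have h1T : (1 : ℕ) ∉ T := fun h => by
        have := hT.1 h
        rw [Finset.mem_sdiff, Finset.mem_Icc] at this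
        omega
      exact Finset.erase_insert h1T
  rw [key, Finset.card_powersetCard, hcard]

/-- The counting bound in Case 1 of the proof of Theorem 5: for `n > 2k > 0` and two
distinct `k`-subsets `A, B` of `[n] \ {1} = [2, n]`, the number of `k`-subsets `S`
of `[n]` containing `1` and intersecting both `A` and `B` is at most
`C(n-1, k-1) - C(n-k-1, k-1) - C(n-k-2, k-2)`. -/
theorem count_sets_meeting_two (n k : ℕ) (hk : 0 < k) (hn : 2 * k < n)
    (A B : Finset ℕ) (hA : A ⊆ Finset.Icc 2 n) (hB : B ⊆ Finset.Icc 2 n)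
    (hAcard : A.card = k) (hBcard : B.card = k) (hAB : A ≠ B) :
    (((Finset.Icc 1 n).powersetCard k).filter
        (fun S => 1 ∈ S ∧ (S ∩ A).Nonempty ∧ (S ∩ B).Nonempty)).card ≤
      (n - 1).choose (k - 1) - (n - k - 1).choose (k - 1) - (n - k - 2).choose (k - 2) := by
  have hn1 : 1 ≤ n := by omega
  -- case k = 1
  rcases Nat.lt_or_ge k 2 with hk1 | hk2
  · interval_cases k
    have : (((Finset.Icc 1 n).powersetCard 1).filter
        (fun S => 1 ∈ S ∧ (S ∩ A).Nonempty ∧ (S ∩ B).Nonempty)) = ∅ := by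
      rw [Finset.eq_empty_iff_forall_notMem]
      intro S hS
      simp only [Finset.mem_filter, Finset.mem_powersetCard] at hS
      obtain ⟨⟨hSsub, hScard⟩, h1S, ⟨x, hx⟩, -⟩ := hS
      rw [Finset.card_eq_one] at hScard
      obtain ⟨a, rfl⟩ := hScard
      rw [Finset.mem_singleton] at h1S
      subst h1S
      rw [Finset.mem_inter, Finset.mem_singleton] at hx
      obtain ⟨rfl, hxA⟩ := hx
      have := hA hxA
      rw [Finset.mem_Icc] at this; omega
    simp [this]
  -- main case k ≥ 2
  set P := ((Finset.Icc 1 n).powersetCard k).filter (fun S => 1 ∈ S) with hP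
  have hPcard : P.card = (n - 1).choose (k - 1) := by
    have := count_avoid n k hk hn1 ∅ (by simp)
    simpa using this
  have hMA : (((Finset.Icc 1 n).powersetCard k).filter (fun S => 1 ∈ S ∧ S ∩ A = ∅)).card
      = (n - k - 1).choose (k - 1) := by
    rw [count_avoid n k hk hn1 A hA, hAcard]
    congr 1; omega
  have hMB : (((Finset.Icc 1 n).powersetCard k).filter (fun S => 1 ∈ S ∧ S ∩ B = ∅)).card
      = (n - k - 1).choose (k - 1) := by
    rw [count_avoid n k hk hn1 B hB, hBcard]
    congr 1; omega
  have hABcard : k + 1 ≤ (A ∪ B).card := by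
    by_contra h
    push_neg at h
    have hEq : A = A ∪ B :=
      Finset.eq_of_subset_of_card_le Finset.subset_union_left (by omega)
    have hBA : B ⊆ A := by rw [hEq]; exact Finset.subset_union_right
    exact hAB (Finset.eq_of_subset_of_card_le hBA (by omega)).symm
  have hMU : (((Finset.Icc 1 n).powersetCard k).filter (fun S => 1 ∈ S ∧ S ∩ (A ∪ B) = ∅)).card
      ≤ (n - k - 2).choose (k - 1) := by
    rw [count_avoid n k hk hn1 (A ∪ B) (Finset.union_subset hA hB)]
    exact Nat.choose_le_choose _ (by omega)
  -- inclusion-exclusion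
  classical
  have hT : (((Finset.Icc 1 n).powersetCard k).filter
        (fun S => 1 ∈ S ∧ (S ∩ A).Nonempty ∧ (S ∩ B).Nonempty))
      = P.filter (fun S => (S ∩ A).Nonempty ∧ (S ∩ B).Nonempty) := by
    rw [hP, Finset.filter_filter]
  have hTneg : P.filter (fun S => ¬((S ∩ A).Nonempty ∧ (S ∩ B).Nonempty))
      = (P.filter (fun S => S ∩ A = ∅)) ∪ (P.filter (fun S => S ∩ B = ∅)) := by
    rw [← Finset.filter_or]
    apply Finset.filter_congr
    intro S _
    rw [← Finset.not_nonempty_iff_eq_empty, ← Finset.not_nonempty_iff_eq_empty]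
    tauto
  have hsplit : (P.filter (fun S => (S ∩ A).Nonempty ∧ (S ∩ B).Nonempty)).card
      + (P.filter (fun S => ¬((S ∩ A).Nonempty ∧ (S ∩ B).Nonempty))).card = P.card :=
    Finset.card_filter_add_card_filter_not _
  have hinter : (P.filter (fun S => S ∩ A = ∅)) ∩ (P.filter (fun S => S ∩ B = ∅))
      = P.filter (fun S => S ∩ (A ∪ B) = ∅) := by
    rw [← Finset.filter_and]
    apply Finset.filter_congr
    intro S _
    rw [Finset.inter_union_distrib_left]
    constructor
    · rintro ⟨h1, h2⟩; rw [h1, h2]; simp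
    · intro h
      constructor <;> [exact Finset.union_eq_empty.1 h |>.1; exact Finset.union_eq_empty.1 h |>.2]
  have hMA' : (P.filter (fun S => S ∩ A = ∅)).card = (n - k - 1).choose (k - 1) := by
    rw [← hMA, hP, Finset.filter_filter]
  have hMB' : (P.filter (fun S => S ∩ B = ∅)).card = (n - k - 1).choose (k - 1) := by
    rw [← hMB, hP, Finset.filter_filter]
  have hMU' : (P.filter (fun S => S ∩ (A ∪ B) = ∅)).card ≤ (n - k - 2).choose (k - 1) := by
    rw [hP, Finset.filter_filter]
    exact hMU
  have hunion := Finset.card_union_add_card_inter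
    (P.filter (fun S => S ∩ A = ∅)) (P.filter (fun S => S ∩ B = ∅))
  rw [hinter, hMA', hMB'] at hunion
  rw [← hTneg] at hunion
  have hpascal : (n - k - 1).choose (k - 1)
      = (n - k - 2).choose (k - 2) + (n - k - 2).choose (k - 1) := by
    have h1 : n - k - 1 = (n - k - 2) + 1 := by omega
    have h2 : k - 1 = (k - 2) + 1 := by omega
    rw [h1, h2, Nat.choose_succ_succ]
  rw [hT]
  omega
end

section
/- Let n, k, t be positive integers with n > 2k and k ≥ 3t. Then ∑_{i=k-t}^{k-1} C(k, i)·C(n-k-1, k-i-1) ≤ C(k, t)·C(n-k-1, t). -/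
lemma two_mul_choose_le (m s : ℕ) (hm : 3 * (s + 1) ≤ m) :
    2 * m.choose s ≤ m.choose (s + 1) := by
  have h := Nat.choose_succ_right_eq m s
  have h2 : 2 * (s + 1) ≤ m - s := by omega
  have : 2 * m.choose s * (s + 1) ≤ m.choose (s + 1) * (s + 1) := by
    calc 2 * m.choose s * (s + 1) = m.choose s * (2 * (s + 1)) := by ring
    _ ≤ m.choose s * (m - s) := Nat.mul_le_mul_left _ h2
    _ = m.choose (s + 1) * (s + 1) := h.symm
  exact Nat.le_of_mul_le_mul_right this (Nat.succ_pos s)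

lemma key_sum (k m t : ℕ) (hk : 3 * t ≤ k) (hm : 3 * t ≤ m) :
    ∀ s, s ≤ t → ∑ j ∈ Finset.Icc 1 s, k.choose j * m.choose (j - 1) ≤
      k.choose s * m.choose s := by
  intro s
  induction s with
  | zero => simp
  | succ s ih =>
    intro hst
    have hst' : s ≤ t := Nat.le_of_succ_le hst
    rw [Finset.sum_Icc_succ_top (by omega)]
    have h1 : ∑ j ∈ Finset.Icc 1 s, k.choose j * m.choose (j - 1) ≤
        k.choose s * m.choose s := ih hst'
    have h2 : k.choose s ≤ k.choose (s + 1) :=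
      Nat.choose_le_succ_of_lt_half_left (by omega)
    have h3 : 2 * m.choose s ≤ m.choose (s + 1) :=
      two_mul_choose_le m s (by omega)
    calc (∑ j ∈ Finset.Icc 1 s, k.choose j * m.choose (j - 1)) +
          k.choose (s + 1) * m.choose (s + 1 - 1)
        ≤ k.choose s * m.choose s + k.choose (s + 1) * m.choose s := by
          simpa using h1
      _ ≤ k.choose (s + 1) * m.choose s + k.choose (s + 1) * m.choose s :=
          Nat.add_le_add_right (Nat.mul_le_mul_right _ h2) _
      _ = k.choose (s + 1) * (2 * m.choose s) := by ring
      _ ≤ k.choose (s + 1) * m.choose (s + 1) := Nat.mul_le_mul_left _ h3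

/-- The bound on `α` in Case 1 of the proof of Theorem 5: for `n > 2k` and `k ≥ 3t`,
`∑_{i=k-t}^{k-1} C(k,i)·C(n-k-1, k-i-1) ≤ C(k,t)·C(n-k-1, t)`. -/
theorem alpha_bound (n k t : ℕ) (ht : 0 < t) (hk : 3 * t ≤ k) (hn : 2 * k < n) :
    ∑ i ∈ Finset.Icc (k - t) (k - 1), k.choose i * (n - k - 1).choose (k - i - 1) ≤
      k.choose t * (n - k - 1).choose t := by
  set m := n - k - 1 with hm
  have hm3 : 3 * t ≤ m := by omega
  have hre : ∑ i ∈ Finset.Icc (k - t) (k - 1), k.choose i * m.choose (k - i - 1) =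
      ∑ j ∈ Finset.Icc 1 t, k.choose j * m.choose (j - 1) := by
    apply Finset.sum_nbij' (fun i => k - i) (fun j => k - j)
    · intro a ha
      simp only [Finset.mem_Icc] at *
      omega
    · intro a ha
      simp only [Finset.mem_Icc] at *
      omega
    · intro a ha
      simp only [Finset.mem_Icc] at ha
      omega
    · intro a ha
      simp only [Finset.mem_Icc] at ha
      omega
    · intro a ha
      simp only [Finset.mem_Icc] at ha
      rw [Nat.choose_symm (by omega : a ≤ k)]
  rw [hre]
  exact key_sum k m t hk hm3 t le_rfl
end

section
/- Let n and k be integers with k ≥ 30 and n ≥ 2k+5. Then C(n-k-2, k-2) ≥ k·(C(n-k-1, 1) + C(n-k+2, 3)). -/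
lemma aux_c2 (x : ℕ) : 2 * (x + 1).choose 2 = x * (x + 1) := by
  induction x with
  | zero => rfl
  | succ n ih =>
    rw [show n + 1 + 1 = (n + 1) + 1 from rfl, Nat.choose_succ_succ,
      Nat.mul_add, ih, Nat.choose_one_right]
    ring

lemma aux_c3 (x : ℕ) : 6 * (x + 2).choose 3 = x * (x + 1) * (x + 2) := by
  induction x with
  | zero => rfl
  | succ n ih =>
    rw [show n + 1 + 2 = (n + 2) + 1 from rfl, Nat.choose_succ_succ,
      Nat.mul_add, ih, show (6 : ℕ) = 3 * 2 from rfl, Nat.mul_assoc,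
      aux_c2 (n + 1)]
    ring

lemma aux_c4 (x : ℕ) : 24 * (x + 3).choose 4 = x * (x + 1) * (x + 2) * (x + 3) := by
  induction x with
  | zero => rfl
  | succ n ih =>
    rw [show n + 1 + 3 = (n + 3) + 1 from rfl, Nat.choose_succ_succ,
      Nat.mul_add, ih, show (24 : ℕ) = 4 * 6 from rfl, Nat.mul_assoc,
      aux_c3 (n + 1)]
    ring

lemma aux_c5 (x : ℕ) : 120 * (x + 4).choose 5 = x * (x + 1) * (x + 2) * (x + 3) * (x + 4) := by
  induction x with
  | zero => rfl
  | succ n ih =>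
    rw [show n + 1 + 4 = (n + 4) + 1 from rfl, Nat.choose_succ_succ,
      Nat.mul_add, ih, show (120 : ℕ) = 5 * 24 from rfl, Nat.mul_assoc,
      aux_c4 (n + 1)]
    ring

lemma aux_mono (a : ℕ) {r s : ℕ} (hrs : r ≤ s) (hs : s ≤ a / 2) :
    a.choose r ≤ a.choose s := by
  induction s, hrs using Nat.le_induction with
  | base => exact le_rfl
  | succ m hm ih =>
    exact (ih (le_of_lt hs)).trans (Nat.choose_le_succ_of_lt_half_left hs)

lemma aux_choose5_le (a b : ℕ) (hb : 5 ≤ b) (hab : b + 5 ≤ a) :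
    a.choose 5 ≤ a.choose b := by
  rcases le_or_gt b (a / 2) with h | h
  · exact aux_mono a hb h
  · have hba : b ≤ a := by omega
    have h1 : a - b ≤ a / 2 := by omega
    have h2 : 5 ≤ a - b := by omega
    calc a.choose 5 ≤ a.choose (a - b) := aux_mono a h2 h1
      _ = a.choose b := Nat.choose_symm hba

/-- Inequality (10) for `t = 1`: if `k ≥ 30` and `n ≥ 2k + 5`, then
`C(n-k-2, k-2) ≥ k·(C(n-k-1, 1) + C(n-k+2, 3))`. -/
theorem key_ineq_t_one (n k : ℕ) (hk : 30 ≤ k) (hn : 2 * k + 5 ≤ n) :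
    k * ((n - k - 1).choose 1 + (n - k + 2).choose 3) ≤ (n - k - 2).choose (k - 2) := by
  -- write n - k = a + 35 with a ≥ 0
  obtain ⟨a, ha⟩ : ∃ a, n - k = a + 35 + (k - 30) := ⟨n - k - 5 - k, by omega⟩
  set b := a + (k - 30) with hb
  have hnk : n - k = b + 35 := by omega
  have h1 : n - k - 1 = b + 34 := by omega
  have h2 : n - k + 2 = b + 37 := by omega
  have h3 : n - k - 2 = b + 33 := by omega
  rw [h1, h2, h3]
  -- step 1: C(b+33, 5) ≤ C(b+33, k-2)
  have hstep1 : (b + 33).choose 5 ≤ (b + 33).choose (k - 2) :=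
    aux_choose5_le _ _ (by omega) (by omega)
  refine le_trans ?_ hstep1
  -- step 2: k * (C(b+34,1) + C(b+37,3)) ≤ C(b+33,5)
  have hk' : k ≤ b + 30 := by omega
  have key : 120 * ((b + 30) * ((b + 34).choose 1 + (b + 37).choose 3))
      ≤ 120 * (b + 33).choose 5 := by
    rw [Nat.choose_one_right, aux_c5 (b + 29)]
    have h6 : 6 * (b + 37).choose 3 = (b + 35) * (b + 36) * (b + 37) := aux_c3 (b + 35)
    have expand : 120 * ((b + 30) * ((b + 34) + (b + 37).choose 3))
        = (b + 30) * (120 * (b + 34) + 20 * (6 * (b + 37).choose 3)) := by ring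
    rw [expand, h6]
    have : (b + 29) * (b + 29 + 1) * (b + 29 + 2) * (b + 29 + 3) * (b + 29 + 4)
        = (b + 30) * (120 * (b + 34) + 20 * ((b + 35) * (b + 36) * (b + 37)))
          + (b ^ 5 + 135 * b ^ 4 + 6845 * b ^ 3 + 154785 * b ^ 2 + 1330914 * b + 385920) := by
      ring
    rw [this]
    exact Nat.le_add_right _ _
  have := Nat.le_of_mul_le_mul_left key (by norm_num : 0 < 120)
  calc k * ((b + 34).choose 1 + (b + 37).choose 3)
      ≤ (b + 30) * ((b + 34).choose 1 + (b + 37).choose 3) :=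
        Nat.mul_le_mul_right _ hk'
    _ ≤ (b + 33).choose 5 := this
end

section
/- Let n, k, t be integers with 1 < t ≤ k/4 - 2 and n ≥ 2k + 14t. Then C(n-k-2, k-2) ≥ C(k, t)·(C(n-k-1, t) + C(n-k+t+1, t+2)). -/
/-!
Since `C(n-k-1, t) ≤ C(n-k+t+1, t+2)`, it suffices to bound twice `C(k, t) · C(n-k+t+1, t+2)`.
By Vandermonde this product is at most `C(n+t+1, 2t+2)`, and comparing factor by factor,
at most `2^(2t+2) · C(n-k-2, 2t+2)`. Raising the lower index of `C(n-k-2, ·)` from `2t+2`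
to `4t+6` gains a factor `2` at every step, because `n-k-2 ≥ 18t+6` is large compared with
`4t+6`; this pays for the loss, and unimodality carries `4t+6` on to `k-2`.
-/

namespace Nat

theorem choose_mul_choose_le_add_choose (a b r s : ℕ) :
    a.choose r * b.choose s ≤ (a + b).choose (r + s) := by
  rw [add_choose_eq]
  exact Finset.single_le_sum (f := fun ij : ℕ × ℕ => a.choose ij.1 * b.choose ij.2)
    (a := (r, s)) (fun _ _ => Nat.zero_le _) (by simp)

theorem descFactorial_le_pow_mul_descFactorial {q a c b : ℕ}
    (h : ∀ i < b, a - i ≤ q * (c - i)) : a.descFactorial b ≤ q ^ b * c.descFactorial b := by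
  induction b with
  | zero => simp
  | succ b ih =>
    rw [descFactorial_succ, descFactorial_succ, pow_succ]
    calc (a - b) * a.descFactorial b ≤ (q * (c - b)) * (q ^ b * c.descFactorial b) :=
          Nat.mul_le_mul (h b b.lt_succ_self) (ih fun i hi => h i (hi.trans b.lt_succ_self))
      _ = q ^ b * q * ((c - b) * c.descFactorial b) := by ring

theorem choose_le_pow_mul_choose {q a c b : ℕ} (h : ∀ i < b, a - i ≤ q * (c - i)) :
    a.choose b ≤ q ^ b * c.choose b := by
  have hdesc := descFactorial_le_pow_mul_descFactorial h
  rw [descFactorial_eq_factorial_mul_choose, descFactorial_eq_factorial_mul_choose,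
    mul_left_comm] at hdesc
  exact Nat.le_of_mul_le_mul_left hdesc (factorial_pos b)

theorem mul_choose_le_choose_succ {q n j : ℕ} (h : (q + 1) * (j + 1) ≤ n + 1) :
    q * n.choose j ≤ n.choose (j + 1) := by
  refine Nat.le_of_mul_le_mul_right ?_ j.succ_pos
  calc q * n.choose j * (j + 1) = n.choose j * (q * (j + 1)) := by ring
    _ ≤ n.choose j * (n - j) := Nat.mul_le_mul_left _ (Nat.le_sub_of_add_le (by linarith))
    _ = n.choose (j + 1) * (j + 1) := (choose_succ_right_eq n j).symm

theorem pow_mul_choose_le_choose_add {q n j d : ℕ} (h : (q + 1) * (j + d) ≤ n + 1) :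
    q ^ d * n.choose j ≤ n.choose (j + d) := by
  induction d with
  | zero => simp
  | succ d ih =>
    calc q ^ (d + 1) * n.choose j = q * (q ^ d * n.choose j) := by ring
      _ ≤ q * n.choose (j + d) := Nat.mul_le_mul_left q (ih (le_trans (by gcongr; omega) h))
      _ ≤ n.choose (j + (d + 1)) := mul_choose_le_choose_succ h

theorem choose_le_choose_of_le_of_two_mul_le {n r s : ℕ} (hrs : r ≤ s) (hs : 2 * s ≤ n) :
    n.choose r ≤ n.choose s := by
  induction s, hrs using Nat.le_induction with
  | base => exact le_rfl
  | succ s _ ih => exact (ih (by omega)).trans (choose_le_succ_of_lt_half_left (by omega))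

theorem choose_le_choose_of_le_of_add_le {n r s : ℕ} (hrs : r ≤ s) (hs : r + s ≤ n) :
    n.choose r ≤ n.choose s := by
  rcases le_or_gt (2 * s) n with h | h
  · exact choose_le_choose_of_le_of_two_mul_le hrs h
  · rw [← choose_symm (by omega : s ≤ n)]
    exact choose_le_choose_of_le_of_two_mul_le (by omega) (by omega)

end Nat

/-- Inequality (10) for `t > 1`: if `1 < t ≤ k/4 - 2` and `n ≥ 2k + 14t`, then
`C(n-k-2, k-2) ≥ C(k,t)·(C(n-k-1, t) + C(n-k+t+1, t+2))`. -/
theorem key_ineq_t_large (n k t : ℕ) (ht : 1 < t) (htk : (t : ℝ) ≤ (k : ℝ) / 4 - 2)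
    (hn : 2 * k + 14 * t ≤ n) :
    k.choose t * ((n - k - 1).choose t + (n - k + t + 1).choose (t + 2)) ≤
      (n - k - 2).choose (k - 2) := by
  have hk : 4 * t + 8 ≤ k := by
    exact_mod_cast (show ((4 * t + 8 : ℕ) : ℝ) ≤ k by push_cast; linarith)
  have hsmall : (n - k - 1).choose t ≤ (n - k + t + 1).choose (t + 2) :=
    (Nat.choose_le_choose t (by omega)).trans
      (Nat.choose_le_choose_of_le_of_add_le (by omega) (by omega))
  have hmerge : k.choose t * (n - k + t + 1).choose (t + 2) ≤ (n + t + 1).choose (2 * t + 2) :=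
    (Nat.choose_mul_choose_le_add_choose _ _ _ _).trans_eq (by congr 1 <;> omega)
  have hshrink :
      (n + t + 1).choose (2 * t + 2) ≤ 2 ^ (2 * t + 2) * (n - k - 2).choose (2 * t + 2) :=
    Nat.choose_le_pow_mul_choose fun i hi => by omega
  have hgrow :
      2 ^ (2 * t + 4) * (n - k - 2).choose (2 * t + 2) ≤ (n - k - 2).choose (4 * t + 6) :=
    (Nat.pow_mul_choose_le_choose_add (by omega)).trans_eq (by congr 1; omega)
  have hmid : (n - k - 2).choose (4 * t + 6) ≤ (n - k - 2).choose (k - 2) :=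
    Nat.choose_le_choose_of_le_of_add_le (by omega) (by omega)
  calc k.choose t * ((n - k - 1).choose t + (n - k + t + 1).choose (t + 2))
      _ ≤ 2 * (k.choose t * (n - k + t + 1).choose (t + 2)) := by rw [two_mul, mul_add]; gcongr
      _ ≤ 2 * 2 ^ (2 * t + 2) * (n - k - 2).choose (2 * t + 2) := by
        rw [mul_assoc]; exact Nat.mul_le_mul_left 2 (hmerge.trans hshrink)
      _ ≤ 2 ^ (2 * t + 4) * (n - k - 2).choose (2 * t + 2) := by
        rw [← pow_succ']; exact Nat.mul_le_mul_right _ (Nat.pow_le_pow_right two_pos (by omega))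
      _ ≤ (n - k - 2).choose (k - 2) := hgrow.trans hmid
end

section
/- Let n, k, u be integers with n ≥ 2k+2 and 3 ≤ u ≤ k. Then (n-k-1)·(n-k-2)·C(n-u-1, n-k-1) ≤ (k-1)·(k-2)·C(n-u-1, k-1). -/
/-- `choose` is monotone on the first half. -/
lemma choose_mono_of_le_half {m a b : ℕ} (hab : a ≤ b) (hb : 2 * b ≤ m) :
    m.choose a ≤ m.choose b := by
  induction b, hab using Nat.le_induction with
  | base => exact le_refl _
  | succ j hj ih =>
    refine (ih (by omega)).trans ?_
    exact Nat.choose_le_succ_of_lt_half_left (by omega)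

/-- `choose m a ≤ choose m b` whenever `a ≤ b ≤ m - a`. -/
lemma choose_mono_of_between {m a b : ℕ} (hab : a ≤ b) (hbm : b ≤ m - a) (ham : a ≤ m) :
    m.choose a ≤ m.choose b := by
  rcases le_or_gt (2 * b) m with h | h
  · exact choose_mono_of_le_half hab h
  · rw [← Nat.choose_symm (show b ≤ m by omega)]
    exact choose_mono_of_le_half (by omega) (by omega)

/-- Inequality (5): for `n ≥ 2k + 2` and `3 ≤ u ≤ k`,
`C(n-u-1, n-k-1)/C(n-u-1, k-1) ≤ (k-1)(k-2)/((n-k-1)(n-k-2))`, stated in the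
cross-multiplied form. -/
theorem ratio_bound (n k u : ℕ) (hn : 2 * k + 2 ≤ n) (hu : 3 ≤ u) (huk : u ≤ k) :
    (n - k - 1) * (n - k - 2) * (n - u - 1).choose (n - k - 1) ≤
      (k - 1) * (k - 2) * (n - u - 1).choose (k - 1) := by
  obtain ⟨e, rfl⟩ : ∃ e, u = e + 3 := ⟨u - 3, by omega⟩
  obtain ⟨c, rfl⟩ : ∃ c, k = e + 3 + c := ⟨k - (e + 3), by omega⟩
  obtain ⟨d, rfl⟩ : ∃ d, n = 2 * e + 2 * c + 8 + d := ⟨n - (2*e+2*c+8), by omega⟩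
  have h0 : 2 * e + 2 * c + 8 + d - (e + 3) - 1 = e + 2 * c + d + 4 := by omega
  have h1 : 2 * e + 2 * c + 8 + d - (e + 3 + c) - 1 = e + c + d + 4 := by omega
  have h2 : 2 * e + 2 * c + 8 + d - (e + 3 + c) - 2 = e + c + d + 3 := by omega
  have h3 : e + 3 + c - 1 = e + c + 2 := by omega
  have h4 : e + 3 + c - 2 = e + c + 1 := by omega
  rw [h0, h1, h2, h3, h4]
  set m : ℕ := e + 2 * c + d + 4 with hm
  -- symmetry: C(m, e+c+d+4) = C(m, c)
  have hsym : m.choose (e + c + d + 4) = m.choose c := by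
    rw [show e + c + d + 4 = m - c from by omega, Nat.choose_symm (by omega)]
  -- absorption identities
  have hA : m.choose (c + 1) * (c + 1) = m.choose c * (e + c + d + 4) := by
    have := Nat.choose_succ_right_eq m c
    rwa [show m - c = e + c + d + 4 from by omega] at this
  have hB : m.choose (c + 2) * (c + 2) = m.choose (c + 1) * (e + c + d + 3) := by
    have := Nat.choose_succ_right_eq m (c + 1)
    rwa [show m - (c + 1) = e + c + d + 3 from by omega] at this
  have key : (e + c + d + 4) * (e + c + d + 3) * m.choose c
      = (c + 1) * (c + 2) * m.choose (c + 2) := by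
    calc (e + c + d + 4) * (e + c + d + 3) * m.choose c
        = m.choose c * (e + c + d + 4) * (e + c + d + 3) := by ring
      _ = m.choose (c + 1) * (c + 1) * (e + c + d + 3) := by rw [hA]
      _ = m.choose (c + 1) * (e + c + d + 3) * (c + 1) := by ring
      _ = m.choose (c + 2) * (c + 2) * (c + 1) := by rw [hB]
      _ = (c + 1) * (c + 2) * m.choose (c + 2) := by ring
  rw [hsym, key]
  have hmono : m.choose (c + 2) ≤ m.choose (e + c + 2) :=
    choose_mono_of_between (by omega) (by omega) (by omega)
  have hle : (c + 1) * (c + 2) ≤ (e + c + 2) * (e + c + 1) := by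
    calc (c + 1) * (c + 2) ≤ (e + c + 1) * (e + c + 2) :=
          Nat.mul_le_mul (by omega) (by omega)
      _ = (e + c + 2) * (e + c + 1) := Nat.mul_comm _ _
  exact Nat.mul_le_mul hle hmono
end

section
/- Let n and k be integers with k ≥ 12 and n ≥ 2k+4. Then (n-2k-2)/n ≥ ∏_{i=2}^{k} (n-k+1-i)/(n-1-i). -/
/-- Quadratic Bernoulli: `(1+x)^m ≥ 1 + m x + m(m-1)/2 x²` for `x ≥ 0`. -/
lemma quad_bernoulli (m : ℕ) (x : ℝ) (hx : 0 ≤ x) :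
    1 + (m : ℝ) * x + (m : ℝ) * ((m : ℝ) - 1) / 2 * x ^ 2 ≤ (1 + x) ^ m := by
  induction m with
  | zero => simp
  | succ m ih =>
    have h1 : (0:ℝ) ≤ (m:ℝ) := Nat.cast_nonneg m
    have hmm : (0:ℝ) ≤ (m:ℝ) * ((m:ℝ) - 1) := by
      rcases Nat.eq_zero_or_pos m with h | h
      · simp [h]
      · have : (1:ℝ) ≤ (m:ℝ) := by exact_mod_cast h
        nlinarith
    have hkey := mul_le_mul_of_nonneg_right ih (show (0:ℝ) ≤ 1 + x by linarith)
    have hexp : (1 + x) ^ (m + 1) = (1 + x) ^ m * (1 + x) := by ring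
    rw [hexp]
    push_cast
    nlinarith [mul_nonneg hmm (mul_nonneg (mul_nonneg hx hx) hx),
      mul_nonneg h1 (mul_nonneg hx hx)]

set_option maxHeartbeats 1000000 in
/-- Inequality (14): for `k ≥ 12` and `n ≥ 2k + 4`,
`(n - 2k - 2)/n ≥ ∏_{i=2}^{k} (n-k+1-i)/(n-1-i)`. -/
theorem product_bound_t_one (n k : ℕ) (hk : 12 ≤ k) (hn : 2 * k + 4 ≤ n) :
    ∏ i ∈ Finset.Icc 2 k, (((n : ℝ) - (k : ℝ) + 1 - (i : ℝ)) / ((n : ℝ) - 1 - (i : ℝ))) ≤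
      ((n : ℝ) - 2 * (k : ℝ) - 2) / (n : ℝ) := by
  have hkR : (12:ℝ) ≤ (k:ℝ) := by exact_mod_cast hk
  have hnR : 2 * (k:ℝ) + 4 ≤ (n:ℝ) := by exact_mod_cast hn
  set N := (n:ℝ)
  set K := (k:ℝ)
  have hA : (0:ℝ) < N - K - 1 := by nlinarith
  have hB : (0:ℝ) < N - 3 := by nlinarith
  have hN : (0:ℝ) < N := by nlinarith
  have hNK : (0:ℝ) < N - 2 * K - 2 := by nlinarith
  -- Step 1: each factor is ≤ (N-K-1)/(N-3) and nonneg
  have step1 : ∏ i ∈ Finset.Icc 2 k, ((N - K + 1 - (i : ℝ)) / (N - 1 - (i : ℝ)))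
      ≤ ((N - K - 1) / (N - 3)) ^ (k - 1) := by
    have hcard : (Finset.Icc 2 k).card = k - 1 := by
      rw [Nat.card_Icc]; omega
    calc ∏ i ∈ Finset.Icc 2 k, ((N - K + 1 - (i : ℝ)) / (N - 1 - (i : ℝ)))
        ≤ ∏ _i ∈ Finset.Icc 2 k, ((N - K - 1) / (N - 3)) := by
          apply Finset.prod_le_prod
          · intro i hi
            simp only [Finset.mem_Icc] at hi
            have hi2 : (2:ℝ) ≤ (i:ℝ) := by exact_mod_cast hi.1
            have hik : (i:ℝ) ≤ K := Nat.cast_le.mpr hi.2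
            have hd : (0:ℝ) < N - 1 - (i:ℝ) := by nlinarith
            have hnum : (0:ℝ) ≤ N - K + 1 - (i:ℝ) := by nlinarith
            positivity
          · intro i hi
            simp only [Finset.mem_Icc] at hi
            have hi2 : (2:ℝ) ≤ (i:ℝ) := by exact_mod_cast hi.1
            have hik : (i:ℝ) ≤ K := Nat.cast_le.mpr hi.2
            have hd : (0:ℝ) < N - 1 - (i:ℝ) := by nlinarith
            rw [div_le_div_iff₀ hd hB]
            nlinarith
      _ = ((N - K - 1) / (N - 3)) ^ (k - 1) := by
          rw [Finset.prod_const, hcard]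
  refine step1.trans ?_
  -- Step 2
  set x : ℝ := (K - 2) / (N - K - 1) with hxdef
  have hx : (0:ℝ) ≤ x := by
    apply div_nonneg <;> nlinarith
  have hber := quad_bernoulli (k - 1) x hx
  have hm : ((k - 1 : ℕ) : ℝ) = K - 1 := by
    have h1 : (1:ℕ) ≤ k := by omega
    push_cast [h1]
    ring
  rw [hm] at hber
  set Q : ℝ := 1 + (K - 1) * x + (K - 1) * (K - 1 - 1) / 2 * x ^ 2 with hQdef
  have hQpos : (0:ℝ) < Q := by
    have t1 : (0:ℝ) ≤ (K - 1) * x := by nlinarith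
    have t2 : (0:ℝ) ≤ (K - 1) * (K - 1 - 1) / 2 * x ^ 2 := by
      apply mul_nonneg
      · nlinarith
      · positivity
    rw [hQdef]; linarith
  have hrw : (1 + x) = (N - 3) / (N - K - 1) := by
    rw [hxdef]; field_simp; ring
  rw [hrw] at hber
  have hpowpos : (0:ℝ) < ((N - 3) / (N - K - 1)) ^ (k - 1) := by positivity
  have hfrac : ((N - K - 1) / (N - 3)) ^ (k - 1) =
      (((N - 3) / (N - K - 1)) ^ (k - 1))⁻¹ := by
    rw [← inv_pow]
    congr 1
    rw [inv_div]
  rw [hfrac]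
  have h1 : (((N - 3) / (N - K - 1)) ^ (k - 1))⁻¹ ≤ Q⁻¹ :=
    inv_anti₀ hQpos hber
  refine h1.trans ?_
  -- Show Q⁻¹ ≤ (N - 2K - 2)/N
  have hQeq : Q = ((N - K - 1) ^ 2 + (K - 1) * (K - 2) * (N - K - 1)
      + (K - 1) * (K - 2) ^ 3 / 2) / (N - K - 1) ^ 2 := by
    rw [hQdef, hxdef]
    field_simp
    ring
  rw [inv_eq_one_div, div_le_div_iff₀ hQpos hN]
  rw [hQeq]
  rw [← mul_div_assoc, le_div_iff₀ (by positivity)]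
  have hM : (0:ℝ) ≤ N - 2 * K - 4 := by linarith
  have hL : (0:ℝ) ≤ K - 12 := by linarith
  have hid : (N - 2 * K - 2) * ((N - K - 1) ^ 2 + (K - 1) * (K - 2) * (N - K - 1)
      + (K - 1) * (K - 2) ^ 3 / 2) - 1 * N * (N - K - 1) ^ 2 =
      8450 + 3920 * (K - 12) + 616 * (K - 12) ^ 2 + 41 * (K - 12) ^ 3 + (K - 12) ^ 4
      + 6590 * (N - 2 * K - 4) + 2505 * (N - 2 * K - 4) * (K - 12)
      + 349 * (N - 2 * K - 4) * (K - 12) ^ 2 + (43 / 2) * (N - 2 * K - 4) * (K - 12) ^ 3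
      + (1 / 2) * (N - 2 * K - 4) * (K - 12) ^ 4
      + 84 * (N - 2 * K - 4) ^ 2 + 19 * (N - 2 * K - 4) ^ 2 * (K - 12)
      + (N - 2 * K - 4) ^ 2 * (K - 12) ^ 2 := by ring
  linarith [hid, mul_nonneg hL hL, mul_nonneg (mul_nonneg hL hL) hL,
    mul_nonneg (mul_nonneg (mul_nonneg hL hL) hL) hL,
    mul_nonneg hM hL, mul_nonneg hM (mul_nonneg hL hL),
    mul_nonneg hM (mul_nonneg (mul_nonneg hL hL) hL),
    mul_nonneg hM (mul_nonneg (mul_nonneg (mul_nonneg hL hL) hL) hL),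
    mul_nonneg hM hM, mul_nonneg (mul_nonneg hM hM) hL,
    mul_nonneg (mul_nonneg hM hM) (mul_nonneg hL hL)]
end

section
/- Let n, k, t be integers with t ≥ 2, k ≥ 4t + 8, and 2k + 14t ≤ n. Then 1 - (2k+6t)/n ≥ (1 - k/n)^{3k/4}, where the right-hand side is the real power with exponent 3k/4. -/
/-- Inequality (15): for integers `t ≥ 2`, `k ≥ 4t + 8` and `n ≥ 2k + 14t`,
`1 - (2k + 6t)/n ≥ (1 - k/n)^{3k/4}` (real power). -/
theorem product_bound_t_large (n k t : ℕ) (ht : 2 ≤ t) (hk : 4 * t + 8 ≤ k)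
    (hn : 2 * k + 14 * t ≤ n) :
    (1 - (k : ℝ) / (n : ℝ)) ^ ((3 * (k : ℝ)) / 4) ≤ 1 - (2 * (k : ℝ) + 6 * (t : ℝ)) / (n : ℝ) := by
  obtain ⟨m, hm4, hm4'⟩ : ∃ m : ℕ, 3 * k ≤ 4 * m + 3 ∧ 4 * m ≤ 3 * k :=
    ⟨3 * k / 4, by omega, by omega⟩
  have hT : (2:ℝ) ≤ (t:ℝ) := by exact_mod_cast ht
  have hK : 4 * (t:ℝ) + 8 ≤ (k:ℝ) := by exact_mod_cast hk
  have hN : 2 * (k:ℝ) + 14 * (t:ℝ) ≤ (n:ℝ) := by exact_mod_cast hn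
  have hMr : 3 * (k:ℝ) ≤ 4 * (m:ℝ) + 3 := by exact_mod_cast hm4
  have hMr' : 4 * (m:ℝ) ≤ 3 * (k:ℝ) := by exact_mod_cast hm4'
  have hn0 : (0:ℝ) < (n:ℝ) := by nlinarith
  have hk0 : (0:ℝ) < (k:ℝ) := by nlinarith
  have hK16 : (16:ℝ) ≤ (k:ℝ) := by nlinarith
  set x : ℝ := (k:ℝ) / (n:ℝ) with hxdef
  clear_value x
  have hx0 : 0 ≤ x := by rw [hxdef]; positivity
  have hxn : x * (n:ℝ) = (k:ℝ) := by rw [hxdef]; field_simp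
  have hx1 : x < 1 := by
    rw [hxdef, div_lt_one hn0]; linarith
  have hbase : 0 < 1 - x := by linarith
  have hme : (m:ℝ) ≤ 3 * (k:ℝ) / 4 := by linarith
  have step1 : (1 - x) ^ ((3 * (k:ℝ)) / 4) ≤ (1 - x) ^ (m:ℕ) := by
    rw [← Real.rpow_natCast (1 - x) m]
    exact Real.rpow_le_rpow_of_exponent_ge hbase (by linarith) hme
  have h1x : 0 < 1 + x := by linarith
  have step2 : (1 - x) ^ m ≤ ((1 + x)⁻¹) ^ m := by
    apply pow_le_pow_left₀ hbase.le
    rw [← one_div, le_div_iff₀ h1x]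
    nlinarith [sq_nonneg x]
  have hbern : 1 + (m:ℝ) * x ≤ (1 + x) ^ m := by
    have := one_add_mul_le_pow (a := x) (by linarith) m
    linarith
  have hmx0 : 0 < 1 + (m:ℝ) * x := by positivity
  have step3 : ((1 + x)⁻¹) ^ m ≤ (1 + (m:ℝ) * x)⁻¹ := by
    rw [inv_pow]
    exact inv_anti₀ hmx0 hbern
  have h4m : (0:ℝ) ≤ 4 * (m:ℝ) - 3 * (k:ℝ) + 3 := by linarith
  have q1 : (0:ℝ) ≤ 2 * (t:ℝ) * (k:ℝ) * (4 * (m:ℝ) - 3 * (k:ℝ) + 3) :=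
    mul_nonneg (by positivity) h4m
  have q2 : (0:ℝ) ≤ (2 * (t:ℝ) - 4) * ((k:ℝ) * (k:ℝ)) :=
    mul_nonneg (by linarith) (by positivity)
  have q3 : (0:ℝ) ≤ 21 * (t:ℝ) * ((k:ℝ) - 4 * (t:ℝ) - 8) :=
    mul_nonneg (by positivity) (by linarith)
  have q4 : (0:ℝ) ≤ (t:ℝ) * (((k:ℝ) - 16) * (4 * (k:ℝ) - 3)) :=
    mul_nonneg (by positivity) (mul_nonneg (by linarith) (by linarith))
  have hii : (2 * (k:ℝ) + 14 * (t:ℝ)) * (2 * (k:ℝ) + 6 * (t:ℝ)) ≤ 8 * (t:ℝ) * ((m:ℝ) * (k:ℝ)) := by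
    linarith [q1, q2, q3, q4]
  have r1 : (0:ℝ) ≤ (k:ℝ) * (4 * (m:ℝ) - 3 * (k:ℝ) + 3) := mul_nonneg hk0.le h4m
  have r3 : (0:ℝ) ≤ ((k:ℝ) - 16) * (3 * (k:ℝ) + 31) :=
    mul_nonneg (by linarith) (by linarith)
  have hA : (0:ℝ) ≤ (m:ℝ) * (k:ℝ) - 2 * (k:ℝ) - 6 * (t:ℝ) := by
    linarith [r1, r3]
  have s1 : (0:ℝ) ≤ ((n:ℝ) - 2 * (k:ℝ) - 14 * (t:ℝ)) * ((m:ℝ) * (k:ℝ) - 2 * (k:ℝ) - 6 * (t:ℝ)) :=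
    mul_nonneg (by linarith) hA
  have hpoly : (2 * (k:ℝ) + 6 * (t:ℝ)) * (n:ℝ) ≤ (m:ℝ) * (k:ℝ) * ((n:ℝ) - 2 * (k:ℝ) - 6 * (t:ℝ)) := by
    linarith [s1, hii]
  have key : (1 + (m:ℝ) * x)⁻¹ ≤ 1 - (2 * (k:ℝ) + 6 * (t:ℝ)) / (n:ℝ) := by
    rw [inv_le_iff_one_le_mul₀ hmx0]
    have e1 : 1 - (2 * (k:ℝ) + 6 * (t:ℝ)) / (n:ℝ) = ((n:ℝ) - (2 * (k:ℝ) + 6 * (t:ℝ))) / (n:ℝ) := by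
      field_simp
    have e2 : 1 + (m:ℝ) * x = ((n:ℝ) + (m:ℝ) * (k:ℝ)) / (n:ℝ) := by
      rw [eq_div_iff (ne_of_gt hn0)]
      linear_combination (m:ℝ) * hxn
    rw [e1, e2, div_mul_div_comm, le_div_iff₀ (by positivity)]
    linarith [hpoly]
  calc (1 - x) ^ ((3 * (k:ℝ)) / 4) ≤ (1 - x) ^ m := step1
    _ ≤ ((1 + x)⁻¹) ^ m := step2
    _ ≤ (1 + (m:ℝ) * x)⁻¹ := step3
    _ ≤ _ := key
end

section
/- Let n > 2k ≥ 6 and let F be an intersecting family of k-element subsets of [n] with diversity γ(F) ≤ C(n-4, k-3). Then Δ(F) + ((n-k-2)/(k-2))·γ(F) ≤ C(n-1, k-1). -/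
/-!
Fix an element `i` of maximal degree, so that `Δ(F)` is the size of the star of `i` and `γ(F)` the
number of sets of `F` avoiding `i`. Deleting `i` maps the star injectively to `(k - 1)`-subsets of
`[n] \ {i}` that meet every set avoiding `i`, so it misses the `(k - 1)`-sets lying below the
complements (in `[n] \ {i}`) of the sets avoiding `i`; hence `Δ(F)` plus the number `d` of those
is at most `C(n - 1, k - 1)`. The complements are `γ(F)` sets of size `n - k - 1`, with
`γ(F) ≤ C(n - 4, n - k - 1)`, so Kruskal–Katona and local LYM give
`γ(F) · C(n - 4, k - 1) ≤ d · C(n - 4, k - 3)`, and `C(n - 4, k - 1) / C(n - 4, k - 3)` is at least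
`(n - k - 2) / (k - 2)`.
-/

open Finset FinsetFamily

theorem Nat.mul_choose_le_mul_choose_add_two {m r : ℕ} (h : 2 * r + 2 ≤ m) :
    (m - r - 1) * m.choose r ≤ (r + 1) * m.choose (r + 2) := by
  have h₁ := Nat.choose_succ_right_eq m r
  have h₂ := Nat.choose_succ_right_eq m (r + 1)
  refine Nat.le_of_mul_le_mul_right ?_ (Nat.succ_pos (r + 1))
  calc (m - r - 1) * m.choose r * (r + 2)
      ≤ (m - r - 1) * m.choose r * (m - r) := Nat.mul_le_mul_left _ (by omega)
    _ = (r + 1) * (m.choose (r + 1) * (m - (r + 1))) := by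
        rw [← Nat.sub_sub, mul_assoc _ (m.choose r), ← h₁]; ring
    _ = (r + 1) * (m.choose (r + 1 + 1) * (r + 1 + 1)) := by rw [h₂]
    _ = (r + 1) * m.choose (r + 2) * (r + 1 + 1) := by ring

namespace Finset

theorem exists_subset_card_eq_forall_lt_imp_mem {ι β : Type*} [DecidableEq ι] [LinearOrder β]
    (f : ι → β) (s : Finset ι) {c : ℕ} (hc : c ≤ #s) :
    ∃ t ⊆ s, #t = c ∧ ∀ x ∈ t, ∀ y ∈ s, f y < f x → y ∈ t := by
  induction s using induction_on_max_value f generalizing c with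
  | empty => exact ⟨∅, empty_subset _, (hc.antisymm (Nat.zero_le _)).symm, by simp⟩
  | insert a s ha hmax ih =>
    rw [card_insert_of_notMem ha] at hc
    rcases eq_or_lt_of_le hc with hc | hc
    · exact ⟨insert a s, Subset.rfl, by rw [card_insert_of_notMem ha, hc], fun x hx y hy _ => hy⟩
    obtain ⟨t, hts, htc, hlow⟩ := ih (Nat.le_of_lt_succ hc)
    refine ⟨t, hts.trans (subset_insert a s), htc, fun x hx y hy hyx => ?_⟩
    rcases mem_insert.1 hy with rfl | hy
    · exact absurd (hmax x (hts hx)) (not_le.2 hyx)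
    · exact hlow x hx y hy hyx

section Shadow

variable {α : Type*} [DecidableEq α]

theorem shadow_iterate_subset_falling {𝒜 : Finset (Finset α)} {s t : ℕ}
    (h𝒜 : (𝒜 : Set (Finset α)).Sized (s + t)) : ∂^[t] 𝒜 ⊆ falling s 𝒜 := by
  intro B hB
  obtain ⟨A, hA, hBA, -⟩ := mem_shadow_iterate_iff_exists_sdiff.1 hB
  exact mem_falling.2 ⟨⟨A, hA, hBA⟩, by simpa using h𝒜.shadow_iterate hB⟩

/-- Iterated local LYM inside `S`: double count the pairs `B ⊆ A` with `A ∈ 𝒜` and `#B = s`. -/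
theorem card_mul_choose_le_card_shadow_iterate_mul {S : Finset α} {𝒜 : Finset (Finset α)}
    {s t : ℕ} (h𝒜 : 𝒜 ⊆ powersetCard (s + t) S) :
    #𝒜 * (#S).choose s ≤ #(∂^[t] 𝒜) * (#S).choose (s + t) := by
  rcases lt_or_ge #S (s + t) with hS | hS
  · simp [subset_empty.1 (powersetCard_eq_empty.2 hS ▸ h𝒜)]
  have hsized : ((∂^[t] 𝒜 : Finset (Finset α)) : Set (Finset α)).Sized s := by
    simpa using (Set.sized_powersetCard S (s + t)).mono h𝒜 |>.shadow_iterate (k := t)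
  have hdouble : #𝒜 * (s + t).choose s ≤ #(∂^[t] 𝒜) * (#S - s).choose t := by
    refine card_mul_le_card_mul (fun A B => B ⊆ A) (fun A hA => ?_) (fun B hB => ?_)
    · have hA' := mem_powersetCard.1 (h𝒜 hA)
      rw [← hA'.2, ← card_powersetCard]
      refine card_le_card fun B hB => (mem_bipartiteAbove _).2 ⟨?_, (mem_powersetCard.1 hB).1⟩
      obtain ⟨hBA, hBs⟩ := mem_powersetCard.1 hB
      exact mem_shadow_iterate_iff_exists_sdiff.2
        ⟨A, hA, hBA, by rw [card_sdiff_of_subset hBA, hA'.2, hBs]; omega⟩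
    · have hBS : B ⊆ S := by
        obtain ⟨A, hA, hBA, -⟩ := mem_shadow_iterate_iff_exists_sdiff.1 hB
        exact hBA.trans (mem_powersetCard.1 (h𝒜 hA)).1
      rw [← hsized hB, ← card_sdiff_of_subset hBS, ← card_powersetCard]
      refine card_le_card_of_injOn (· \ B) (fun A hA => ?_) (fun A hA A' hA' h => ?_)
      · obtain ⟨hA𝒜, hBA⟩ := (mem_bipartiteBelow _).1 hA
        have hA' := mem_powersetCard.1 (h𝒜 hA𝒜)
        refine mem_powersetCard.2 ⟨sdiff_subset_sdiff hA'.1 le_rfl, ?_⟩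
        rw [card_sdiff_of_subset hBA, hA'.2, hsized hB]; omega
      · have hBA := ((mem_bipartiteBelow _).1 hA).2
        have hBA' := ((mem_bipartiteBelow _).1 hA').2
        simpa [sdiff_union_of_subset hBA, sdiff_union_of_subset hBA'] using
          congrArg (· ∪ B) h
  have hchoose := Nat.choose_mul (n := #S) (le_add_right le_rfl : s ≤ s + t)
  rw [add_tsub_cancel_left] at hchoose
  refine Nat.le_of_mul_le_mul_right ?_ (Nat.choose_pos (by omega : t ≤ #S - s))
  calc #𝒜 * (#S).choose s * (#S - s).choose t
      = #𝒜 * (s + t).choose s * (#S).choose (s + t) := by rw [mul_assoc, ← hchoose]; ring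
    _ ≤ #(∂^[t] 𝒜) * (#S - s).choose t * (#S).choose (s + t) := by gcongr
    _ = #(∂^[t] 𝒜) * (#S).choose (s + t) * (#S - s).choose t := by ring

end Shadow

namespace Colex

variable {n : ℕ}

theorem isInitSeg_powersetCard_filter_val_lt (r m : ℕ) :
    IsInitSeg (powersetCard r {i : Fin n | (i : ℕ) < m}) r := by
  refine ⟨Set.sized_powersetCard _ _, fun A B hA ⟨hBA, hB⟩ => mem_powersetCard.2 ⟨?_, hB⟩⟩
  intro b hb
  have hlt : toColex (B.image Fin.val) < toColex (A.image Fin.val) := by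
    rwa [toColex_image_lt_toColex_image Fin.val_strictMono]
  have hA : ∀ a ∈ A.image Fin.val, a < m := by
    simp only [mem_image]
    rintro _ ⟨a, ha, rfl⟩
    simpa using (mem_powersetCard.1 hA).1 ha
  simpa using forall_lt_mono hlt.le hA b (mem_image_of_mem _ hb)

theorem exists_isInitSeg_subset_powersetCard {r m c : ℕ} (hc : c ≤ m.choose r) (hm : m ≤ n) :
    ∃ 𝒞 : Finset (Finset (Fin n)), #𝒞 = c ∧ IsInitSeg 𝒞 r ∧
      𝒞 ⊆ powersetCard r {i : Fin n | (i : ℕ) < m} := by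
  have hP := isInitSeg_powersetCard_filter_val_lt (n := n) r m
  obtain ⟨𝒞, h𝒞P, h𝒞c, hlow⟩ := exists_subset_card_eq_forall_lt_imp_mem toColex
    (powersetCard r {i : Fin n | (i : ℕ) < m}) (c := c)
    (by rwa [card_powersetCard, Fin.card_filter_val_lt, min_eq_right hm])
  refine ⟨𝒞, h𝒞c, ⟨hP.1.mono h𝒞P, fun A B hA hB => ?_⟩, h𝒞P⟩
  exact hlow A hA B (hP.2 (h𝒞P hA) hB) hB.1

end Colex

/-- Kruskal–Katona reduces the bound to an initial segment of colex, which for families of at most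
`m.choose (s + t)` sets lives on `{0, …, m - 1}`, where local LYM applies. -/
theorem card_mul_choose_le_card_shadow_iterate_mul_of_card_le_choose {n m s t : ℕ}
    {𝒜 : Finset (Finset (Fin n))} (h𝒜 : (𝒜 : Set (Finset (Fin n))).Sized (s + t))
    (hcard : #𝒜 ≤ m.choose (s + t)) (hm : m ≤ n) :
    #𝒜 * m.choose s ≤ #(∂^[t] 𝒜) * m.choose (s + t) := by
  obtain ⟨𝒞, h𝒞𝒜, h𝒞, h𝒞S⟩ := Colex.exists_isInitSeg_subset_powersetCard hcard hm
  have hS : #{i : Fin n | (i : ℕ) < m} = m := by rw [Fin.card_filter_val_lt, min_eq_right hm]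
  calc #𝒜 * m.choose s = #𝒞 * m.choose s := by rw [h𝒞𝒜]
    _ ≤ #(∂^[t] 𝒞) * m.choose (s + t) := hS ▸ card_mul_choose_le_card_shadow_iterate_mul h𝒞S
    _ ≤ #(∂^[t] 𝒜) * m.choose (s + t) := Nat.mul_le_mul_right _ (iterated_kk h𝒜 h𝒞𝒜.le h𝒞)

section Complements

variable {α : Type*} [Fintype α] [DecidableEq α]

def complementsAvoiding (i : α) (𝒢 : Finset (Finset α)) : Finset (Finset α) :=
  𝒢.image fun B => (insert i B)ᶜ

variable {i : α} {𝒢 : Finset (Finset α)}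

theorem card_complementsAvoiding (h𝒢 : ∀ B ∈ 𝒢, i ∉ B) : #(complementsAvoiding i 𝒢) = #𝒢 := by
  refine card_image_of_injOn fun B hB B' hB' hBB' => ?_
  rw [← erase_insert (h𝒢 B hB), ← erase_insert (h𝒢 B' hB'), compl_injective hBB']

theorem sized_complementsAvoiding {k : ℕ} (h𝒢 : (𝒢 : Set (Finset α)).Sized k)
    (hi : ∀ B ∈ 𝒢, i ∉ B) :
    (complementsAvoiding i 𝒢 : Set (Finset α)).Sized (Fintype.card α - (k + 1)) := by
  intro A hA
  obtain ⟨B, hB, rfl⟩ := mem_image.1 hA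
  rw [card_compl, card_insert_of_notMem (hi B hB), h𝒢 hB]

/-- Removing `i` from a member of the star of `i` gives a `(k - 1)`-set avoiding `i` that meets
every member of `F` outside the star, so it is not below any complement of such a member. -/
theorem card_filter_mem_add_card_falling_le {F : Finset (Finset α)} {k : ℕ}
    (hF : (F : Set (Finset α)).Sized k) (hint : (F : Set (Finset α)).Intersecting) (i : α) :
    #(F.filter (fun A => i ∈ A)) +
        #(falling (k - 1) (complementsAvoiding i (F.filter (fun A => i ∉ A)))) ≤
      (Fintype.card α - 1).choose (k - 1) := by
  set U := powersetCard (k - 1) ({i}ᶜ : Finset α)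
  set 𝒟 := falling (k - 1) (complementsAvoiding i (F.filter (fun A => i ∉ A)))
  set ℰ := (F.filter (fun A => i ∈ A)).image (·.erase i)
  have hℰ : #ℰ = #(F.filter (fun A => i ∈ A)) :=
    card_image_of_injOn fun A hA A' hA' => erase_injOn' i (mem_filter.1 hA).2 (mem_filter.1 hA').2
  have hℰU : ℰ ⊆ U := by
    simp only [ℰ, U, image_subset_iff, mem_filter, mem_powersetCard]
    rintro A ⟨hA, hiA⟩
    refine ⟨fun x hx => mem_compl.2 fun hxi => ?_, by rw [card_erase_of_mem hiA, hF hA]⟩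
    simp_all
  have h𝒟U : 𝒟 ⊆ U := by
    intro C hC
    obtain ⟨⟨_, hA, hCA⟩, hC⟩ := mem_falling.1 hC
    obtain ⟨B, -, rfl⟩ := mem_image.1 hA
    exact mem_powersetCard.2 ⟨hCA.trans (compl_subset_compl.2 (by simp)), hC⟩
  have hℰ𝒟 : Disjoint ℰ 𝒟 := by
    simp only [ℰ, 𝒟, disjoint_left, mem_image, mem_filter, mem_falling, complementsAvoiding]
    rintro _ ⟨A, ⟨hA, hiA⟩, rfl⟩ ⟨⟨_, ⟨B, ⟨hB, hiB⟩, rfl⟩, hAB⟩, -⟩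
    obtain ⟨x, hxA, hxB⟩ := not_disjoint_iff.1 (hint hA hB)
    have hxi : x ≠ i := by rintro rfl; exact hiB hxB
    simpa [hxB] using hAB (mem_erase.2 ⟨hxi, hxA⟩)
  calc #(F.filter (fun A => i ∈ A)) + #𝒟 = #(ℰ ∪ 𝒟) := by rw [card_union_of_disjoint hℰ𝒟, hℰ]
    _ ≤ #U := card_le_card (union_subset hℰU h𝒟U)
    _ = (Fintype.card α - 1).choose (k - 1) := by rw [card_powersetCard, card_compl, card_singleton]

end Complements

theorem card_mul_choose_le_card_falling_complementsAvoiding {n k m : ℕ} {i : Fin n}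
    {𝒢 : Finset (Finset (Fin n))} (h𝒢 : (𝒢 : Set (Finset (Fin n))).Sized k)
    (hi : ∀ B ∈ 𝒢, i ∉ B) (hk : 0 < k) (hkn : 2 * k ≤ n) (hm : m ≤ n)
    (hcard : #𝒢 ≤ m.choose (n - k - 1)) :
    #𝒢 * m.choose (k - 1) ≤
      #(falling (k - 1) (complementsAvoiding i 𝒢)) * m.choose (n - k - 1) := by
  have hsized := sized_complementsAvoiding h𝒢 hi
  rw [Fintype.card_fin, show n - (k + 1) = (k - 1) + (n - 2 * k) by omega] at hsized
  rw [show n - k - 1 = (k - 1) + (n - 2 * k) by omega] at hcard ⊢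
  rw [← card_complementsAvoiding hi] at hcard ⊢
  calc #(complementsAvoiding i 𝒢) * m.choose (k - 1)
      ≤ #(∂^[n - 2 * k] (complementsAvoiding i 𝒢)) * m.choose (k - 1 + (n - 2 * k)) :=
        card_mul_choose_le_card_shadow_iterate_mul_of_card_le_choose hsized hcard hm
    _ ≤ _ := Nat.mul_le_mul_right _ (card_le_card (shadow_iterate_subset_falling hsized))

theorem div_mul_card_le_card_falling_complementsAvoiding {n k : ℕ} {i : Fin n}
    {𝒢 : Finset (Finset (Fin n))} (h𝒢 : (𝒢 : Set (Finset (Fin n))).Sized k)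
    (hi : ∀ B ∈ 𝒢, i ∉ B) (hk : 3 ≤ k) (hkn : 2 * k ≤ n) (hcard : #𝒢 ≤ (n - 4).choose (k - 3)) :
    ((n : ℝ) - k - 2) / (k - 2) * #𝒢 ≤ #(falling (k - 1) (complementsAvoiding i 𝒢)) := by
  have hsymm : (n - 4).choose (k - 3) = (n - 4).choose (n - k - 1) := by
    rw [← Nat.choose_symm (by omega)]; congr 1; omega
  have hshadow := card_mul_choose_le_card_falling_complementsAvoiding h𝒢 hi (by omega) hkn
    (by omega : n - 4 ≤ n) (hsymm ▸ hcard)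
  have hbin := Nat.mul_choose_le_mul_choose_add_two (m := n - 4) (r := k - 3) (by omega)
  rw [← hsymm] at hshadow
  rw [show n - 4 - (k - 3) - 1 = n - (k + 2) by omega, show k - 3 + 2 = k - 1 by omega,
    show k - 3 + 1 = k - 2 by omega] at hbin
  rify [show k + 2 ≤ n by omega, show 2 ≤ k by omega] at hbin hshadow
  have hpos : (0 : ℝ) < (n - 4).choose (k - 3) := by exact_mod_cast Nat.choose_pos (by omega)
  have hk2 : (0 : ℝ) < k - 2 := by rify at hk; linarith
  refine le_of_mul_le_mul_right ?_ hpos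
  rw [div_mul_eq_mul_div, div_mul_eq_mul_div, div_le_iff₀ hk2]
  nlinarith

end Finset

/-- Corollary 9: let `n > 2k ≥ 6` and let `F` be an intersecting family of
`k`-subsets of `[n]` with diversity `γ(F) ≤ C(n-4, k-3)`. Then
`Δ(F) + ((n-k-2)/(k-2))·γ(F) ≤ C(n-1, k-1)`. -/
theorem weighted_diversity_bound (n k : ℕ) (hk : 3 ≤ k) (hn : 2 * k < n)
    (F : Finset (Finset (Fin n)))
    (hcard : ∀ A ∈ F, A.card = k)
    (hint : ∀ A ∈ F, ∀ B ∈ F, (A ∩ B).Nonempty)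
    (hdiv : F.card - Finset.univ.sup (fun i : Fin n => (F.filter (fun A => i ∈ A)).card) ≤
      (n - 4).choose (k - 3)) :
    ((Finset.univ.sup (fun i : Fin n => (F.filter (fun A => i ∈ A)).card) : ℕ) : ℝ) +
      ((n : ℝ) - (k : ℝ) - 2) / ((k : ℝ) - 2) *
        ((F.card - Finset.univ.sup (fun i : Fin n => (F.filter (fun A => i ∈ A)).card) : ℕ) : ℝ)
      ≤ ((n - 1).choose (k - 1) : ℝ) := by
  have : Nonempty (Fin n) := ⟨⟨0, by omega⟩⟩
  obtain ⟨i, -, hΔ⟩ := exists_mem_eq_sup univ univ_nonempty fun i : Fin n => #(F.filter (i ∈ ·))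
  set G := F.filter (fun A => i ∉ A)
  have hγ : #F - #(F.filter (i ∈ ·)) = #G := by
    rw [← card_filter_add_card_filter_not (s := F) (fun A => i ∈ A), Nat.add_sub_cancel_left]
  rw [hΔ, hγ] at hdiv ⊢
  have hstar := card_filter_mem_add_card_falling_le (k := k) hcard
    (fun A hA B hB => not_disjoint_iff_nonempty_inter.2 (hint A hA B hB)) i
  rw [Fintype.card_fin] at hstar
  have hweighted := div_mul_card_le_card_falling_complementsAvoiding (i := i)
    (fun A hA => hcard A (mem_filter.1 hA).1) (fun A hA => (mem_filter.1 hA).2) hk hn.le hdiv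
  rify at hstar
  linarith
end
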